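/- Let G and H be topological groups, Γ ≤ G a discrete subgroup, π : G → H a continuous surjective group homomorphism, τ : H → ℤ a group homomorphism, and u ∈ G. Suppose the action of Λ = π(Γ) on H given by λ · h = (π u)^(−τ(λ)) · h · λ is properly discontinuous (for every compact K ⊆ H the set of λ ∈ Λ with (π u)^(−τ λ) · K · λ meeting K is finite). Then the action of Γ on G given by γ · g = u^(−τ(π γ)) · g · γ is properly discontinuous: for every compact K ⊆ G, the set {γ ∈ Γ : u^(−τ(π γ)) · K · γ ∩ K ≠ ∅} is finite. -/

import Mathlib

/-!
A returning element `γ` (one with `u ^ (-n) * g * γ ∈ K` for some `g ∈ K`, `n = τ (π γ)`) lies in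
`K⁻¹ * u ^ n * K`, and `π γ` is a returning element of the action downstairs on `π '' K`. Hence only
finitely many twists `n` occur, so all returning elements lie in one compact set, which a discrete
subgroup meets in a finite set.
-/

open Pointwise

section DiscreteSubgroup

variable {G : Type*} [Group G] [TopologicalSpace G] [IsTopologicalGroup G]

/-- A right translate of a small enough identity neighbourhood contains at most one point of `Γ`. -/
theorem IsCompact.finite_inter_subgroup_of_discreteTopology (Γ : Subgroup G) [DiscreteTopology Γ]
    {K : Set G} (hK : IsCompact K) : (K ∩ Γ).Finite := by
  obtain ⟨U, hU, -, hUΓ⟩ := IsDiscrete.exists_nhds_eq_one_of_image_mulLeft_inter_nonempty Γ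
    (SetLike.isDiscrete_iff_discreteTopology.2 ‹_›)
  have hsingle : ∀ x : G, ((Γ : Set G) ∩ (· * x⁻¹) ⁻¹' U).Subsingleton := by
    rintro x a ⟨haΓ, ha⟩ b ⟨hbΓ, hb⟩
    have hab : a * b⁻¹ = 1 := hUΓ _ (Γ.mul_mem haΓ (Γ.inv_mem hbΓ))
      ⟨a * x⁻¹, ⟨b * x⁻¹, hb, by simp [mul_assoc]⟩, ha⟩
    exact mul_inv_eq_one.1 hab
  obtain ⟨t, -, hKt⟩ := hK.elim_nhds_subcover (fun x ↦ (· * x⁻¹) ⁻¹' U) fun x _ ↦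
    (continuous_mul_const x⁻¹).continuousAt.preimage_mem_nhds (by simpa using hU)
  refine (t.finite_toSet.biUnion fun x _ ↦ (hsingle x).finite).subset ?_
  rintro g ⟨hgK, hgΓ⟩
  obtain ⟨x, hx, hgx⟩ := Set.mem_iUnion₂.1 (hKt hgK)
  exact Set.mem_iUnion₂.2 ⟨x, hx, hgΓ, hgx⟩

end DiscreteSubgroup

def twistedReturns {G : Type*} [Group G] (Γ : Subgroup G) (σ : G → ℤ) (u : G) (K : Set G) :
    Set G :=
  {γ | γ ∈ Γ ∧ ∃ g ∈ K, u ^ (-σ γ) * g * γ ∈ K}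

section TwistedReturns

variable {G H : Type*} [Group G] [Group H]

theorem mem_inv_mul_zpow_smul_of_mem_twistedReturns {Γ : Subgroup G} {σ : G → ℤ} {u : G}
    {K : Set G} {γ : G} (hγ : γ ∈ twistedReturns Γ σ u K) : γ ∈ K⁻¹ * (u ^ σ γ • K) := by
  obtain ⟨-, g, hg, hgγ⟩ := hγ
  exact ⟨g⁻¹, Set.inv_mem_inv.2 hg, u ^ σ γ * (u ^ (-σ γ) * g * γ),
    Set.smul_mem_smul_set hgγ, by simp [mul_assoc]⟩

theorem MonoidHom.map_mem_twistedReturns (π : G →* H) {Γ : Subgroup G} {σ : H → ℤ} {u : G}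
    {K : Set G} {γ : G} (hγ : γ ∈ twistedReturns Γ (σ ∘ π) u K) :
    π γ ∈ twistedReturns (Γ.map π) σ (π u) (π '' K) := by
  obtain ⟨hγΓ, g, hg, hgγ⟩ := hγ
  exact ⟨⟨γ, hγΓ, rfl⟩, π g, ⟨g, hg, rfl⟩, _, hgγ, by simp⟩

variable [TopologicalSpace G] [IsTopologicalGroup G]

theorem twistedReturns_finite_of_map (π : G →* H) (Γ : Subgroup G) [DiscreteTopology Γ]
    (σ : H → ℤ) (u : G) {K : Set G} (hK : IsCompact K)
    (hfin : (twistedReturns (Γ.map π) σ (π u) (π '' K)).Finite) :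
    (twistedReturns Γ (σ ∘ π) u K).Finite := by
  have htrap : IsCompact (⋃ h ∈ twistedReturns (Γ.map π) σ (π u) (π '' K),
      K⁻¹ * (u ^ σ h • K)) :=
    hfin.isCompact_biUnion fun _ _ ↦ hK.inv.mul (hK.smul _)
  refine (htrap.finite_inter_subgroup_of_discreteTopology Γ).subset fun γ hγ ↦ ⟨?_, hγ.1⟩
  exact Set.mem_biUnion (π.map_mem_twistedReturns hγ)
    (mem_inv_mul_zpow_smul_of_mem_twistedReturns hγ)

end TwistedReturns

theorem twisted_action_properly_discontinuous_general
    {G H : Type*} [Group G] [TopologicalSpace G] [IsTopologicalGroup G]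
    [Group H] [TopologicalSpace H]
    (Γ : Subgroup G) [DiscreteTopology Γ]
    (π : G →* H) (hπcont : Continuous π)
    (τ : H →* Multiplicative ℤ) (u : G)
    (hΛ : ∀ K' : Set H, IsCompact K' →
      {lam : H | lam ∈ Γ.map π ∧
        ∃ h ∈ K', (π u) ^ (-(Multiplicative.toAdd (τ lam))) * h * lam ∈ K'}.Finite) :
    ∀ K : Set G, IsCompact K →
      {γ : G | γ ∈ Γ ∧
        ∃ g ∈ K, u ^ (-(Multiplicative.toAdd (τ (π γ)))) * g * γ ∈ K}.Finite :=
  fun K hK ↦ twistedReturns_finite_of_map π Γ (fun h ↦ Multiplicative.toAdd (τ h)) u hK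
    (hΛ _ (hK.image hπcont))

/-- Proper discontinuity of the twisted Γ-action on G descends from proper
discontinuity of the twisted Λ = π(Γ)-action on H. -/
theorem twisted_action_properly_discontinuous
    {G H : Type*} [Group G] [TopologicalSpace G] [IsTopologicalGroup G]
    [Group H] [TopologicalSpace H] [IsTopologicalGroup H]
    (Γ : Subgroup G) [DiscreteTopology Γ]
    (π : G →* H) (hπcont : Continuous π) (hπsurj : Function.Surjective π)
    (τ : H →* Multiplicative ℤ) (u : G)
    (hΛ : ∀ K' : Set H, IsCompact K' →
      {lam : H | lam ∈ Γ.map π ∧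
        ∃ h ∈ K', (π u) ^ (-(Multiplicative.toAdd (τ lam))) * h * lam ∈ K'}.Finite) :
    ∀ K : Set G, IsCompact K →
      {γ : G | γ ∈ Γ ∧
        ∃ g ∈ K, u ^ (-(Multiplicative.toAdd (τ (π γ)))) * g * γ ∈ K}.Finite :=
  twisted_action_properly_discontinuous_general Γ π hπcont τ u hΛ
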